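/- Let α, β > 0 with α + β > 1. Let ν(k) and ν₀(k) be the numbers of 1s and of 0s in the binary expansion of k (with ν₀(0) := 0), and f(n) := Σ_{0 ≤ k < n} α^{ν(k)} β^{ν₀(k)}. Then f(1) = 1, f(n) = α f(⌊n/2⌋) + β f(⌈n/2⌉) + (1 − β) for n ≥ 2, and f(n) = (α/(α+β−1))·S_{α,β}(n) + (β−1)/(α+β−1) for all n ≥ 1. -/

import Mathlib

/-- `ν(k)`, the number of 1s in the binary expansion of `k`. -/
def nu (k : ℕ) : ℕ := (Nat.digits 2 k).sum

/-- `ν₀(k)`, the number of 0s in the binary expansion of `k` (with `ν₀(0) = 0`). -/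
def nuZero (k : ℕ) : ℕ := (Nat.digits 2 k).count 0

/-!
Split `0 ≤ k < n` by the parity of `k`. Appending a last binary digit `1` (`j ↦ 2j + 1`)
multiplies the weight `α ^ ν(k) * β ^ ν₀(k)` by `α`, and appending a `0` (`j ↦ 2j`) multiplies it
by `β`, except at `j = 0`, whose expansion is empty rather than `0`; this exception is the
constant `1 - β` in the recurrence for `f`. Shifting `f` by `(1 - β) / (α + β - 1)` removes the
constant, and a solution of the homogeneous recurrence is determined by its value at `1`, so the
shifted `f` is a multiple of `S`.
-/

open Finset

lemma digits_two_two_mul_add_one (j : ℕ) : Nat.digits 2 (2 * j + 1) = 1 :: Nat.digits 2 j := by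
  rw [add_comm, Nat.digits_add 2 one_lt_two 1 j one_lt_two (Or.inl one_ne_zero)]

lemma digits_two_two_mul {j : ℕ} (hj : j ≠ 0) : Nat.digits 2 (2 * j) = 0 :: Nat.digits 2 j := by
  rw [← Nat.digits_add 2 one_lt_two 0 j two_pos (Or.inr hj), zero_add]

lemma nu_two_mul_add_one (j : ℕ) : nu (2 * j + 1) = nu j + 1 := by
  rw [nu, nu, digits_two_two_mul_add_one, List.sum_cons, add_comm]

lemma nuZero_two_mul_add_one (j : ℕ) : nuZero (2 * j + 1) = nuZero j := by
  rw [nuZero, nuZero, digits_two_two_mul_add_one, List.count_cons_of_ne one_ne_zero]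

lemma nu_two_mul {j : ℕ} (hj : j ≠ 0) : nu (2 * j) = nu j := by
  rw [nu, nu, digits_two_two_mul hj, List.sum_cons, zero_add]

lemma nuZero_two_mul {j : ℕ} (hj : j ≠ 0) : nuZero (2 * j) = nuZero j + 1 := by
  rw [nuZero, nuZero, digits_two_two_mul hj, List.count_cons_self]

theorem Finset.sum_range_eq_sum_even_add_sum_odd {M : Type*} [AddCommMonoid M] (t : ℕ → M)
    (n : ℕ) :
    ∑ k ∈ range n, t k
      = ∑ j ∈ range ((n + 1) / 2), t (2 * j) + ∑ j ∈ range (n / 2), t (2 * j + 1) := by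
  induction n with
  | zero => simp
  | succ n ih =>
    obtain ⟨m, rfl | rfl⟩ := Nat.even_or_odd' n
    · rw [show (2 * m + 1 + 1) / 2 = m + 1 by omega, show (2 * m + 1) / 2 = m by omega,
        sum_range_succ, ih, show (2 * m + 1) / 2 = m by omega, show 2 * m / 2 = m by omega]
      simp only [sum_range_succ]
      abel
    · rw [show (2 * m + 1 + 1 + 1) / 2 = m + 1 by omega, show (2 * m + 1 + 1) / 2 = m + 1 by omega,
        sum_range_succ, ih, show (2 * m + 1 + 1) / 2 = m + 1 by omega,
        show (2 * m + 1) / 2 = m by omega]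
      simp only [sum_range_succ]
      abel

def digitWeight (α β : ℝ) (k : ℕ) : ℝ := α ^ nu k * β ^ nuZero k

section digitWeight

variable (α β : ℝ)

@[simp]
lemma digitWeight_zero : digitWeight α β 0 = 1 := by
  simp [digitWeight, nu, nuZero]

lemma digitWeight_two_mul_add_one (j : ℕ) :
    digitWeight α β (2 * j + 1) = α * digitWeight α β j := by
  rw [digitWeight, digitWeight, nu_two_mul_add_one, nuZero_two_mul_add_one, pow_succ]
  ring

lemma digitWeight_two_mul {j : ℕ} (hj : j ≠ 0) :
    digitWeight α β (2 * j) = β * digitWeight α β j := by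
  rw [digitWeight, digitWeight, nu_two_mul hj, nuZero_two_mul hj, pow_succ]
  ring

lemma sum_range_digitWeight_two_mul (m : ℕ) :
    ∑ j ∈ range (m + 1), digitWeight α β (2 * j)
      = β * ∑ j ∈ range (m + 1), digitWeight α β j + (1 - β) := by
  rw [sum_range_succ' _ m, sum_range_succ' _ m, mul_zero, digitWeight_zero, mul_add, mul_sum]
  simp only [← digitWeight_two_mul α β (Nat.succ_ne_zero _)]
  ring

lemma sum_range_digitWeight_two_mul_add_one (m : ℕ) :
    ∑ j ∈ range m, digitWeight α β (2 * j + 1)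
      = α * ∑ j ∈ range m, digitWeight α β j := by
  simp only [mul_sum, digitWeight_two_mul_add_one]

lemma sum_range_digitWeight_eq {n : ℕ} (hn : n ≠ 0) :
    ∑ k ∈ range n, digitWeight α β k
      = α * ∑ k ∈ range (n / 2), digitWeight α β k
        + β * ∑ k ∈ range ((n + 1) / 2), digitWeight α β k + (1 - β) := by
  obtain ⟨m, hm⟩ : ∃ m, (n + 1) / 2 = m + 1 := ⟨(n + 1) / 2 - 1, by omega⟩
  rw [sum_range_eq_sum_even_add_sum_odd, sum_range_digitWeight_two_mul_add_one, hm,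
    sum_range_digitWeight_two_mul]
  ring

end digitWeight

lemma eq_mul_of_halving_recurrence {α β : ℝ} {g S : ℕ → ℝ} (hS1 : S 1 = 1)
    (hS : ∀ n, 2 ≤ n → S n = α * S (n / 2) + β * S ((n + 1) / 2))
    (hg : ∀ n, 2 ≤ n → g n = α * g (n / 2) + β * g ((n + 1) / 2)) :
    ∀ n, 1 ≤ n → g n = g 1 * S n := by
  intro n
  induction n using Nat.strong_induction_on with
  | _ n ih =>
    intro hn
    rcases hn.eq_or_lt with rfl | hn
    · rw [hS1, mul_one]
    · rw [hg n hn, hS n hn, ih (n / 2) (by omega) (by omega),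
        ih ((n + 1) / 2) (by omega) (by omega)]
      ring

theorem sum_digits_two_params_general (α β : ℝ) (hab : 1 < α + β)
    (f : ℕ → ℝ) (hf : ∀ n : ℕ, f n = ∑ k ∈ Finset.range n, α ^ nu k * β ^ nuZero k)
    (S : ℕ → ℝ) (hS1 : S 1 = 1)
    (hSrec : ∀ n : ℕ, 2 ≤ n → S n = α * S (n / 2) + β * S ((n + 1) / 2)) :
    f 1 = 1 ∧
    (∀ n : ℕ, 2 ≤ n → f n = α * f (n / 2) + β * f ((n + 1) / 2) + (1 - β)) ∧
    ∀ n : ℕ, 1 ≤ n → f n = α / (α + β - 1) * S n + (β - 1) / (α + β - 1) := by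
  have hf1 : f 1 = 1 := by simpa [nu, nuZero] using hf 1
  have hfrec : ∀ n : ℕ, 2 ≤ n → f n = α * f (n / 2) + β * f ((n + 1) / 2) + (1 - β) :=
    fun n hn => by simp only [hf]; exact sum_range_digitWeight_eq α β (by omega)
  refine ⟨hf1, hfrec, fun n hn => ?_⟩
  have hc : α + β - 1 ≠ 0 := by linarith
  have hshift := eq_mul_of_halving_recurrence (g := fun n => f n + (1 - β) / (α + β - 1))
    hS1 hSrec (fun n hn => by simp only [hfrec n hn]; field_simp; ring) n hn
  simp only [hf1] at hshift
  field_simp at hshift ⊢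
  linarith

/-- For `α, β > 0` with `α+β > 1`, the partial sum `f(n) = Σ_{0≤k<n} α^{ν(k)} β^{ν₀(k)}`
satisfies `f(1) = 1`, `f(n) = α f(⌊n/2⌋) + β f(⌈n/2⌉) + (1−β)` for `n ≥ 2`, and
`f(n) = (α/(α+β−1)) S_{α,β}(n) + (β−1)/(α+β−1)` for all `n ≥ 1`. -/
theorem sum_digits_two_params (α β : ℝ) (hα : 0 < α) (hβ : 0 < β) (hab : 1 < α + β)
    (f : ℕ → ℝ) (hf : ∀ n : ℕ, f n = ∑ k ∈ Finset.range n, α ^ nu k * β ^ nuZero k)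
    (S : ℕ → ℝ) (hS1 : S 1 = 1)
    (hSrec : ∀ n : ℕ, 2 ≤ n → S n = α * S (n / 2) + β * S ((n + 1) / 2)) :
    f 1 = 1 ∧
    (∀ n : ℕ, 2 ≤ n → f n = α * f (n / 2) + β * f ((n + 1) / 2) + (1 - β)) ∧
    ∀ n : ℕ, 1 ≤ n → f n = α / (α + β - 1) * S n + (β - 1) / (α + β - 1) :=
  sum_digits_two_params_general α β hab f hf S hS1 hSrec
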